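/- Let h = (s, p) be a nonconstant rational Γ-inner function, let ζ ∈ 𝕋 be a royal node of h with h(ζ) = (2\bar{ω}, \bar{ω}²), ω ∈ 𝕋, and let υ be a finite Blaschke product with υ(ζ) = ω. Then it cannot happen that both derivatives vanish: (2υp − s)'(ζ) = 0 and (2 − υs)'(ζ) = 0 lead to a contradiction; i.e. Φ ∘ (υ, h) has at most one cancellation at ζ. -/

import Mathlib

open Complex Metric Set MeasureTheory Filter ComplexConjugate

noncomputable section

/-- A finite Blaschke product of degree `n`. -/
def IsBlaschkeOfDegree (f : ℂ → ℂ) (n : ℕ) : Prop :=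
  ∃ (c : ℂ) (α : Fin n → ℂ), ‖c‖ = 1 ∧ (∀ j, ‖α j‖ < 1) ∧
    ∀ z : ℂ, f z = c * ∏ j, (z - α j) / (1 - conj (α j) * z)

/-- A finite Blaschke product (rational inner function). -/
def IsFiniteBlaschke (f : ℂ → ℂ) : Prop := ∃ n, IsBlaschkeOfDegree f n

/-- A Blaschke product of degree at most `n` (the class Bl_n). -/
def BlaschkeDegLE (f : ℂ → ℂ) (n : ℕ) : Prop := ∃ d ≤ n, IsBlaschkeOfDegree f d

/-- The closed symmetrized bidisc. -/
def GammaSet : Set (ℂ × ℂ) := {x | ∃ z w : ℂ, ‖z‖ ≤ 1 ∧ ‖w‖ ≤ 1 ∧ x = (z + w, z * w)}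

/-- A rational function with no poles in the closed unit disc. -/
def IsRationalDisc (f : ℂ → ℂ) : Prop :=
  ∃ P Q : Polynomial ℂ, (∀ z : ℂ, ‖z‖ ≤ 1 → Q.eval z ≠ 0) ∧
    ∀ z : ℂ, f z = P.eval z / Q.eval z

/-- A rational analytic map of the disc into Γ. -/
def IsRationalGammaMap (s p : ℂ → ℂ) : Prop :=
  IsRationalDisc s ∧ IsRationalDisc p ∧ ∀ z : ℂ, ‖z‖ < 1 → (s z, p z) ∈ GammaSet

/-- A rational Γ-inner function: rational, maps 𝔻 into Γ, and boundary values on 𝕋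
lie in the distinguished boundary bΓ. -/
def IsRationalGammaInner (s p : ℂ → ℂ) : Prop :=
  IsRationalGammaMap s p ∧
  ∀ lam : ℂ, ‖lam‖ = 1 → ‖p lam‖ = 1 ∧ ‖s lam‖ ≤ 2 ∧ s lam = conj (s lam) * p lam

/-- Membership in the class ℰ_{ν,k}: h = (s,p) is a rational map 𝔻 → Γ and there
exists m ∈ Bl_ν with Φ∘(m,h) = (2mp − s)/(2 − ms) ∈ Bl_{k−1} (stated in
cleared-denominator form). -/
def MemE (ν k : ℕ) (s p : ℂ → ℂ) : Prop :=
  IsRationalGammaMap s p ∧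
  ∃ m q : ℂ → ℂ, BlaschkeDegLE m ν ∧ BlaschkeDegLE q (k - 1) ∧
    ∀ z : ℂ, (2 - m z * s z) * q z = 2 * m z * p z - s z

/-- An inner function: analytic and bounded by 1 on 𝔻 with unimodular radial
boundary values a.e. on 𝕋. -/
def IsInner (f : ℂ → ℂ) : Prop :=
  DifferentiableOn ℂ f (ball (0:ℂ) 1) ∧ (∀ z ∈ ball (0:ℂ) 1, ‖f z‖ ≤ 1) ∧
  ∀ᵐ θ : ℝ, ∃ b : ℂ, ‖b‖ = 1 ∧
    Tendsto (fun r : ℝ => f (r * Complex.exp (Complex.I * θ)))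
      (nhdsWithin 1 (Set.Iio 1)) (nhds b)

/-- A Γ-inner function: analytic map 𝔻 → Γ whose radial boundary values lie a.e.
in the distinguished boundary bΓ. -/
def IsGammaInnerAE (s p : ℂ → ℂ) : Prop :=
  DifferentiableOn ℂ s (ball (0:ℂ) 1) ∧ DifferentiableOn ℂ p (ball (0:ℂ) 1) ∧
  (∀ z ∈ ball (0:ℂ) 1, (s z, p z) ∈ GammaSet) ∧
  ∀ᵐ θ : ℝ, ∃ sb pb : ℂ,
    Tendsto (fun r : ℝ => s (r * Complex.exp (Complex.I * θ)))
      (nhdsWithin 1 (Set.Iio 1)) (nhds sb) ∧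
    Tendsto (fun r : ℝ => p (r * Complex.exp (Complex.I * θ)))
      (nhdsWithin 1 (Set.Iio 1)) (nhds pb) ∧
    ‖pb‖ = 1 ∧ ‖sb‖ ≤ 2 ∧ sb = conj sb * pb


/-!
Suppose both derivatives vanish. Differentiating `2υp − s` and `2 − υs` at the royal node gives
`υ'(ζ) = −½ω²s'(ζ)` and `s'(ζ) = ωp'(ζ)`, hence `2 A_υ(ζ) = −A_p(ζ)` for the phasar derivatives
`A_f(ζ) = ζ f'(ζ) / f(ζ)`. Both are nonnegative because `|υ|` and `|p|` attain their maximum over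
the closed disc at `ζ`, so `p'(ζ) = 0`. A rational self-map of the closed disc whose derivative
vanishes at a unimodular boundary value is constant (a Julia–Carathéodory type rigidity), so
`p ≡ ω̄²`; then `ωs` is real on the circle, hence constant, and `h` would be constant.
-/

open scoped ComplexOrder Topology

theorem norm_le_of_forall_norm_eq_one_norm_le {f : ℂ → ℂ}
    (hf : DifferentiableOn ℂ f (closedBall 0 1)) {C : ℝ} (hC : ∀ z : ℂ, ‖z‖ = 1 → ‖f z‖ ≤ C)
    {z : ℂ} (hz : ‖z‖ ≤ 1) : ‖f z‖ ≤ C := by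
  refine Complex.norm_le_of_forall_mem_frontier_norm_le (U := ball 0 1) isBounded_ball ?_ ?_ ?_
  · exact DifferentiableOn.diffContOnCl (by rwa [closure_ball 0 one_ne_zero])
  · intro w hw
    rw [frontier_ball 0 one_ne_zero, mem_sphere_zero_iff_norm] at hw
    exact hC w hw
  · rwa [closure_ball 0 one_ne_zero, mem_closedBall_zero_iff]

theorem re_le_of_forall_norm_eq_one_re_le {f : ℂ → ℂ}
    (hf : DifferentiableOn ℂ f (closedBall 0 1)) {C : ℝ} (hC : ∀ z : ℂ, ‖z‖ = 1 → (f z).re ≤ C)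
    {z : ℂ} (hz : ‖z‖ ≤ 1) : (f z).re ≤ C := by
  have h := norm_le_of_forall_norm_eq_one_norm_le hf.cexp (C := Real.exp C)
    (fun w hw => by simpa [norm_exp] using hC w hw) hz
  simpa [norm_exp] using h

def phasarDeriv (f : ℂ → ℂ) (ζ : ℂ) : ℂ := ζ * deriv f ζ / f ζ

/- `|f|²` is maximal at `ζ` over the disc: its derivative vanishes along the circle and is
nonpositive towards the centre. -/
theorem phasarDeriv_nonneg {f : ℂ → ℂ} {ζ : ℂ} (hf : DifferentiableAt ℂ f ζ)
    (hmax : IsMaxOn (fun z => ‖f z‖) (closedBall 0 ‖ζ‖) ζ) : 0 ≤ phasarDeriv f ζ := by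
  set w := conj (f ζ) * deriv f ζ
  set L : ℂ →L[ℝ] ℝ := 2 • (innerSL ℝ (f ζ)).comp
    ((ContinuousLinearMap.toSpanSingleton ℂ (deriv f ζ)).restrictScalars ℝ)
  have hL : ∀ y, L y = 2 * (w * y).re := fun y => by
    simp only [L, w, smul_apply, ContinuousLinearMap.comp_apply,
      ContinuousLinearMap.coe_restrictScalars', ContinuousLinearMap.toSpanSingleton_apply,
      coe_innerSL_apply, Complex.inner, smul_eq_mul, nsmul_eq_mul, Nat.cast_ofNat]
    ring_nf
  have hF : HasFDerivAt (fun z => ‖f z‖ ^ 2) L ζ :=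
    (hf.hasDerivAt.hasFDerivAt.restrictScalars ℝ).norm_sq
  have hmaxF : IsMaxOn (fun z => ‖f z‖ ^ 2) (closedBall 0 ‖ζ‖) ζ := fun z hz =>
    pow_le_pow_left₀ (norm_nonneg _) (hmax hz) 2
  have hradial : L (0 - ζ) ≤ 0 :=
    hmaxF.localize.hasFDerivWithinAt_nonpos hF.hasFDerivWithinAt
      (sub_mem_posTangentConeAt_of_segment_subset
        ((convex_closedBall 0 _).segment_subset (by simp) (by simp)))
  have hγ : HasDerivAt (fun t : ℝ => ζ * exp (t * I)) (ζ * I) 0 := by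
    have : HasDerivAt (fun u : ℂ => ζ * exp (u * I)) (ζ * I) ((0 : ℝ) : ℂ) :=
      (((hasDerivAt_id _).mul_const I).cexp.const_mul ζ).congr_deriv (by simp)
    simpa using this.comp_ofReal
  have htangent : L (ζ * I) = 0 := by
    refine IsLocalMax.hasDerivAt_eq_zero (f := (fun z => ‖f z‖ ^ 2) ∘ fun t : ℝ => ζ * exp (t * I))
      (Filter.Eventually.of_forall fun t => ?_) (hF.comp_hasDerivAt_of_eq 0 hγ (by simp))
    simpa using hmaxF (by simp [norm_exp_ofReal_mul_I] : ζ * exp (t * I) ∈ closedBall 0 ‖ζ‖)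
  rw [hL] at hradial htangent
  have hre : 0 ≤ (w * ζ).re := by simp only [zero_sub, mul_neg, neg_re] at hradial; linarith
  have him : (w * ζ).im = 0 := by rw [← mul_assoc, mul_I_re] at htangent; linarith
  rcases eq_or_ne (f ζ) 0 with h0 | h0
  · simp [phasarDeriv, h0]
  have hphasar : phasarDeriv f ζ = ((‖f ζ‖ ^ 2)⁻¹ : ℝ) * (w * ζ) := by
    simp only [phasarDeriv, w]
    push_cast
    field_simp
    linear_combination -(ζ * deriv f ζ) * conj_mul' (f ζ)
  rw [hphasar]
  exact mul_nonneg (zero_le_real.2 (by positivity)) (nonneg_iff.2 ⟨hre, him.symm⟩)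

theorem phasarDeriv_nonneg_of_norm_le_one {f : ℂ → ℂ} {ζ : ℂ} (hζ : ‖ζ‖ = 1)
    (hf : DifferentiableAt ℂ f ζ) (hle : ∀ z : ℂ, ‖z‖ ≤ 1 → ‖f z‖ ≤ 1) (hfζ : ‖f ζ‖ = 1) :
    0 ≤ phasarDeriv f ζ :=
  phasarDeriv_nonneg hf fun z hz => by simpa [hfζ] using hle z (by simpa [hζ] using hz)

theorem two_mul_phasarDeriv_eq_neg {s p υ : ℂ → ℂ} {ζ ω : ℂ} (hω : ‖ω‖ = 1)
    (hs : DifferentiableAt ℂ s ζ) (hp : DifferentiableAt ℂ p ζ) (hυ : DifferentiableAt ℂ υ ζ)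
    (hsv : s ζ = 2 * conj ω) (hpv : p ζ = conj ω ^ 2) (hυv : υ ζ = ω)
    (h₁ : deriv (fun z => 2 * υ z * p z - s z) ζ = 0)
    (h₂ : deriv (fun z => 2 - υ z * s z) ζ = 0) :
    2 * phasarDeriv υ ζ = -phasarDeriv p ζ := by
  have hωω : ω * conj ω = 1 := by simp [mul_conj', hω]
  have hω₀ : ω ≠ 0 := by rintro rfl; simp at hω
  have hω₀' : conj ω ≠ 0 := (map_ne_zero _).2 hω₀
  have d₁ : HasDerivAt (fun z => 2 * υ z * p z - s z)
      (2 * deriv υ ζ * p ζ + 2 * υ ζ * deriv p ζ - deriv s ζ) ζ :=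
    ((hυ.hasDerivAt.const_mul 2).mul hp.hasDerivAt).sub hs.hasDerivAt
  have d₂ : HasDerivAt (fun z => 2 - υ z * s z) (0 - (deriv υ ζ * s ζ + υ ζ * deriv s ζ)) ζ :=
    (hasDerivAt_const ζ 2).sub (hυ.hasDerivAt.mul hs.hasDerivAt)
  rw [d₁.deriv, hpv, hυv] at h₁
  rw [d₂.deriv, hυv, hsv] at h₂
  simp only [phasarDeriv, hυv, hpv]
  field_simp
  linear_combination (ζ / 2) * h₁ - (ζ * conj ω / 2) * h₂ - (ζ * deriv s ζ / 2) * hωω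

theorem IsRationalDisc.differentiableAt {f : ℂ → ℂ} (hf : IsRationalDisc f) {z : ℂ}
    (hz : ‖z‖ ≤ 1) : DifferentiableAt ℂ f z := by
  obtain ⟨P, Q, hQ, hPQ⟩ := hf
  rw [funext hPQ]
  exact P.differentiableAt.div Q.differentiableAt (hQ z hz)

theorem IsRationalDisc.differentiableOn {f : ℂ → ℂ} (hf : IsRationalDisc f) :
    DifferentiableOn ℂ f (closedBall 0 1) := fun _ hz =>
  (hf.differentiableAt (mem_closedBall_zero_iff.1 hz)).differentiableWithinAt

theorem one_sub_conj_mul_ne_zero {α z : ℂ} (hα : ‖α‖ < 1) (hz : ‖z‖ ≤ 1) :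
    1 - conj α * z ≠ 0 := by
  have : ‖conj α * z‖ < 1 := by
    rw [norm_mul, norm_conj]
    nlinarith [norm_nonneg α, norm_nonneg z]
  intro h
  rw [← sub_eq_zero.1 h] at this
  simp at this

theorem norm_blaschkeFactor_eq_one {α z : ℂ} (hα : ‖α‖ < 1) (hz : ‖z‖ = 1) :
    ‖(z - α) / (1 - conj α * z)‖ = 1 := by
  have hzα : z - α ≠ 0 := sub_ne_zero.2 (by rintro rfl; linarith)
  have hden : 1 - conj α * z = z * conj (z - α) := by
    rw [map_sub, mul_sub, mul_conj', hz]
    push_cast; ring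
  rw [norm_div, hden, norm_mul, norm_conj, hz, one_mul, div_self (norm_ne_zero_iff.2 hzα)]

theorem IsFiniteBlaschke.differentiableAt {υ : ℂ → ℂ} (hυ : IsFiniteBlaschke υ) {z : ℂ}
    (hz : ‖z‖ ≤ 1) : DifferentiableAt ℂ υ z := by
  obtain ⟨n, c, α, -, hα, hυ⟩ := hυ
  rw [funext hυ]
  refine (DifferentiableAt.fun_finsetProd fun j _ => ?_).const_mul c
  exact (differentiableAt_id.sub_const _).div ((differentiableAt_const _).sub
    (differentiableAt_id.const_mul _)) (one_sub_conj_mul_ne_zero (hα j) hz)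

theorem IsFiniteBlaschke.norm_eq_one {υ : ℂ → ℂ} (hυ : IsFiniteBlaschke υ) {z : ℂ}
    (hz : ‖z‖ = 1) : ‖υ z‖ = 1 := by
  obtain ⟨n, c, α, hc, hα, hυ⟩ := hυ
  rw [hυ, norm_mul, hc, one_mul, norm_prod]
  exact Finset.prod_eq_one fun j _ => norm_blaschkeFactor_eq_one (hα j) hz

theorem IsFiniteBlaschke.norm_le_one {υ : ℂ → ℂ} (hυ : IsFiniteBlaschke υ) {z : ℂ}
    (hz : ‖z‖ ≤ 1) : ‖υ z‖ ≤ 1 :=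
  norm_le_of_forall_norm_eq_one_norm_le
    (fun _ hw => (hυ.differentiableAt (mem_closedBall_zero_iff.1 hw)).differentiableWithinAt)
    (fun _ hw => (hυ.norm_eq_one hw).le) hz

section

open Polynomial

theorem Polynomial.X_sub_C_sq_dvd_of_isRoot_derivative {R : Type*} [CommRing R] {N : R[X]}
    {a : R} (h : N.IsRoot a) (h' : (derivative N).IsRoot a) : (X - C a) ^ 2 ∣ N := by
  rcases eq_or_ne N 0 with rfl | hN
  · exact dvd_zero _
  · exact (le_rootMultiplicity_iff hN).1 ((one_lt_rootMultiplicity_iff_isRoot hN).2 ⟨h, h'⟩)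

theorem IsRationalDisc.exists_sub_eq_sq_mul {f : ℂ → ℂ} (hf : IsRationalDisc f) {ζ : ℂ}
    (hζ : ‖ζ‖ ≤ 1) (hder : deriv f ζ = 0) :
    ∃ k : ℂ → ℂ, IsRationalDisc k ∧ ∀ z : ℂ, ‖z‖ ≤ 1 → f z - f ζ = (z - ζ) ^ 2 * k z := by
  obtain ⟨P, Q, hQ, hPQ⟩ := hf
  have hQζ := hQ ζ hζ
  have hPζ : P.eval ζ = f ζ * Q.eval ζ := by rw [hPQ, div_mul_cancel₀ _ hQζ]
  have hP'ζ : (derivative P).eval ζ = f ζ * (derivative Q).eval ζ := by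
    have h : HasDerivAt f (((derivative P).eval ζ * Q.eval ζ - P.eval ζ * (derivative Q).eval ζ)
        / Q.eval ζ ^ 2) ζ := by
      rw [funext hPQ]; exact (P.hasDerivAt ζ).div (Q.hasDerivAt ζ) hQζ
    rw [h.deriv, div_eq_zero_iff, or_iff_left (pow_ne_zero 2 hQζ), sub_eq_zero, hPζ] at hder
    exact mul_right_cancel₀ hQζ (by linear_combination hder)
  obtain ⟨M, hM⟩ := X_sub_C_sq_dvd_of_isRoot_derivative (N := P - C (f ζ) * Q) (a := ζ)
    (by simp [hPζ]) (by simp [hP'ζ])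
  refine ⟨fun z => M.eval z / Q.eval z, ⟨M, Q, hQ, fun _ => rfl⟩, fun z hz => ?_⟩
  have h := congrArg (eval z) hM
  simp only [eval_sub, eval_mul, eval_C, eval_pow, eval_X] at h
  rw [hPQ, mul_div_assoc', eq_div_iff (hQ z hz), ← h]
  field_simp [hQ z hz]

theorem IsRationalDisc.eq_of_infinite {f : ℂ → ℂ} (hf : IsRationalDisc f) {S : Set ℂ} {c : ℂ}
    (hS : S.Infinite) (hS₁ : ∀ z ∈ S, ‖z‖ ≤ 1) (hSf : ∀ z ∈ S, f z = c) :
    ∀ z : ℂ, ‖z‖ ≤ 1 → f z = c := by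
  obtain ⟨P, Q, hQ, hPQ⟩ := hf
  have hN : P - C c * Q = 0 := by
    refine eq_zero_of_infinite_isRoot _ (hS.mono fun z hz => ?_)
    have h := hSf z hz
    rw [hPQ, div_eq_iff (hQ z (hS₁ z hz))] at h
    simp [h]
  intro z hz
  have h := congrArg (eval z) hN
  simp only [eval_sub, eval_mul, eval_C, eval_zero, sub_eq_zero] at h
  rw [hPQ, h, mul_div_cancel_right₀ _ (hQ z hz)]

end

theorem mem_closure_sphere_sdiff_singleton {ζ : ℂ} (hζ : ‖ζ‖ = 1) :
    ζ ∈ closure (sphere (0 : ℂ) 1 \ {ζ}) := by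
  have hγ : Tendsto (fun t : ℝ => ζ * exp (t * I)) (𝓝[>] 0) (𝓝 ζ) := by
    have : Continuous fun t : ℝ => ζ * exp (t * I) := by fun_prop
    simpa using (this.tendsto 0).mono_left nhdsWithin_le_nhds
  refine mem_closure_of_tendsto hγ ?_
  filter_upwards [Ioo_mem_nhdsGT Real.pi_pos] with t ht
  refine ⟨by simp [hζ, norm_exp_ofReal_mul_I], fun h => ?_⟩
  have hζ₀ : ζ ≠ 0 := by rintro rfl; simp at hζ
  have h1 : exp (t * I) = 1 := by simpa [hζ₀] using h
  have := congrArg im h1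
  rw [exp_ofReal_mul_I_im, one_im] at this
  exact (Real.sin_pos_of_pos_of_lt_pi ht.1 ht.2).ne' this

theorem sub_sq_eq_neg_norm_sq_mul {z ζ : ℂ} (hz : ‖z‖ = 1) (hζ : ‖ζ‖ = 1) :
    (z - ζ) ^ 2 = -((‖z - ζ‖ ^ 2 : ℝ) : ℂ) * (z * ζ) := by
  have hz' := mul_conj' z
  have hζ' := mul_conj' ζ
  rw [hz, ofReal_one, one_pow] at hz'
  rw [hζ, ofReal_one, one_pow] at hζ'
  push_cast
  rw [← mul_conj', map_sub]
  linear_combination (ζ * (z - ζ)) * hz' - (z * (z - ζ)) * hζ'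

theorem eq_one_of_norm_le_one_of_re_eq_one {w : ℂ} (hw : ‖w‖ ≤ 1) (hre : w.re = 1) : w = 1 := by
  have h := (normSq_eq_norm_sq w).trans_le (pow_le_one₀ (norm_nonneg w) hw)
  rw [normSq_apply, hre] at h
  exact Complex.ext hre (by simpa using (by nlinarith : w.im = 0))

/- On the circle `(z - ζ)² = -|z - ζ|² zζ`, so `Re (zζ k z) ≤ 0` there; the maximum principle
carries this into the disc, and on the radius through `ζ` it forces `Re (1 - g) = 0`. -/
theorem eq_one_on_radius_of_one_sub_eq_sq_mul {g k : ℂ → ℂ} {ζ : ℂ} (hζ : ‖ζ‖ = 1)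
    (hk : DifferentiableOn ℂ k (closedBall 0 1)) (hg : ∀ z : ℂ, ‖z‖ ≤ 1 → ‖g z‖ ≤ 1)
    (hgk : ∀ z : ℂ, ‖z‖ ≤ 1 → 1 - g z = (z - ζ) ^ 2 * k z) {r : ℝ} (hr₀ : 0 < r)
    (hr₁ : r < 1) : g (r * ζ) = 1 := by
  have hre : ∀ z : ℂ, ‖z‖ ≤ 1 → 0 ≤ (1 - g z).re := fun z hz => by
    simpa using (re_le_norm (g z)).trans (hg z hz)
  set m : ℂ → ℂ := fun z => z * ζ * k z
  have hm : DifferentiableOn ℂ m (closedBall 0 1) := (differentiableOn_id.mul_const ζ).mul hk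
  have hsphere : ∀ z ∈ sphere (0 : ℂ) 1 \ {ζ}, (m z).re ≤ 0 := by
    rintro z ⟨hz, hne : z ≠ ζ⟩
    rw [mem_sphere_zero_iff_norm] at hz
    have h := hre z hz.le
    have e : (z - ζ) ^ 2 * k z = ((‖z - ζ‖ ^ 2 : ℝ) : ℂ) * -m z := by
      rw [sub_sq_eq_neg_norm_sq_mul hz hζ]; ring
    rw [hgk z hz.le, e, re_ofReal_mul, neg_re] at h
    have hpos : 0 < ‖z - ζ‖ ^ 2 := by positivity [sub_ne_zero.2 hne]
    nlinarith
  have hζm : (m ζ).re ≤ 0 := by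
    refine ContinuousWithinAt.closure_le (mem_closure_sphere_sdiff_singleton hζ) ?_
      continuousWithinAt_const hsphere
    exact (continuous_re.comp_continuousOn hm.continuousOn).continuousWithinAt
      (by simp [hζ]) |>.mono (sdiff_subset.trans sphere_subset_closedBall)
  have hdisc : ∀ z : ℂ, ‖z‖ ≤ 1 → (m z).re ≤ 0 := fun z hz => by
    refine re_le_of_forall_norm_eq_one_re_le hm (fun w hw => ?_) hz
    rcases eq_or_ne w ζ with rfl | hne
    · exact hζm
    · exact hsphere w ⟨by simpa using hw, hne⟩
  have hrζ : ‖(r : ℂ) * ζ‖ ≤ 1 := by simp [hζ, abs_of_pos hr₀, hr₁.le]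
  have hradius : (r : ℂ) * (1 - g (r * ζ)) = ((1 - r) ^ 2 : ℝ) * m (r * ζ) := by
    rw [hgk _ hrζ]; push_cast; ring
  have h := congrArg re hradius
  rw [re_ofReal_mul, re_ofReal_mul] at h
  have hzero : (1 - g (r * ζ)).re = 0 := by
    nlinarith [hre _ hrζ, hdisc _ hrζ, mul_nonneg (sq_nonneg (1 - r)) (hre _ hrζ)]
  rw [sub_re, one_re, sub_eq_zero, eq_comm] at hzero
  exact eq_one_of_norm_le_one_of_re_eq_one (hg _ hrζ) hzero

theorem IsRationalDisc.eq_of_deriv_eq_zero {f : ℂ → ℂ} (hf : IsRationalDisc f) {ζ : ℂ}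
    (hζ : ‖ζ‖ = 1) (hle : ∀ z : ℂ, ‖z‖ ≤ 1 → ‖f z‖ ≤ 1) (hfζ : ‖f ζ‖ = 1)
    (hder : deriv f ζ = 0) : ∀ z : ℂ, ‖z‖ ≤ 1 → f z = f ζ := by
  obtain ⟨k, hk, hfk⟩ := hf.exists_sub_eq_sq_mul hζ.le hder
  have hc : conj (f ζ) * f ζ = 1 := by simp [conj_mul', hfζ]
  have hradius : ∀ r : ℝ, 0 < r → r < 1 → f (r * ζ) = f ζ := by
    intro r hr₀ hr₁
    have h := eq_one_on_radius_of_one_sub_eq_sq_mul (g := fun z => conj (f ζ) * f z)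
      (k := fun z => -conj (f ζ) * k z) hζ (hk.differentiableOn.const_mul _)
      (fun z hz => by simpa [hfζ] using hle z hz)
      (fun z hz => by linear_combination (-conj (f ζ)) * hfk z hz - hc) hr₀ hr₁
    linear_combination f ζ * h - f (r * ζ) * hc
  have hζ₀ : ζ ≠ 0 := by rintro rfl; simp at hζ
  have hinj : InjOn (fun r : ℝ => (r : ℂ) * ζ) (Ioo 0 1) := fun a _ b _ hab =>
    ofReal_injective (mul_right_cancel₀ hζ₀ hab)
  refine hf.eq_of_infinite ((Ioo_infinite zero_lt_one).image hinj) ?_ ?_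
  · rintro _ ⟨r, hr, rfl⟩
    simp [hζ, abs_of_pos hr.1, hr.2.le]
  · rintro _ ⟨r, hr, rfl⟩
    exact hradius r hr.1 hr.2

theorem eq_of_conj_eq_on_sphere {f : ℂ → ℂ} (hf : DifferentiableOn ℂ f (closedBall 0 1))
    (hreal : ∀ z : ℂ, ‖z‖ = 1 → conj (f z) = f z) : ∀ z : ℂ, ‖z‖ ≤ 1 → f z = f 0 := by
  have him : ∀ z : ℂ, ‖z‖ ≤ 1 → (f z).im = 0 := by
    intro z hz
    have hsphere : ∀ w : ℂ, ‖w‖ = 1 → (f w).im = 0 := fun w hw => conj_eq_iff_im.1 (hreal w hw)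
    have h₁ := re_le_of_forall_norm_eq_one_re_le (hf.const_mul I) (C := 0)
      (fun w hw => by simp [hsphere w hw]) hz
    have h₂ := re_le_of_forall_norm_eq_one_re_le (hf.const_mul (-I)) (C := 0)
      (fun w hw => by simp [hsphere w hw]) hz
    simp only [mul_re, I_re, I_im, neg_re, neg_im] at h₁ h₂
    linarith
  have hne : ∀ z : ℂ, ‖z‖ ≤ 1 → f z + I ≠ 0 := fun z hz h => by
    simpa [him z hz] using congrArg im h
  -- the Cayley transform of `f` is unimodular on the disc, hence constant
  set g : ℂ → ℂ := fun z => (f z - I) / (f z + I)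
  have hg : ∀ z : ℂ, ‖z‖ ≤ 1 → ‖g z‖ = 1 := fun z hz => by
    have h : f z - I = conj (f z + I) := by
      rw [map_add, conj_I, conj_eq_iff_im.2 (him z hz), sub_eq_add_neg]
    rw [norm_div, h, norm_conj, div_self (norm_ne_zero_iff.2 (hne z hz))]
  have hgd : DiffContOnCl ℂ g (ball 0 1) := by
    refine DifferentiableOn.diffContOnCl ?_
    rw [closure_ball 0 one_ne_zero]
    exact (hf.sub_const I).div (hf.add_const I) fun z hz => hne z (mem_closedBall_zero_iff.1 hz)
  have hmax : IsMaxOn (norm ∘ g) (ball 0 1) 0 := fun z hz => by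
    simp [hg z (mem_ball_zero_iff.1 hz).le, hg 0 (by simp)]
  intro z hz
  have h := eqOn_closedBall_of_isMaxOn_norm hgd hmax (mem_closedBall_zero_iff.2 hz)
  simp only [g, Function.const_apply, div_eq_div_iff (hne z hz) (hne 0 (by simp))] at h
  have h2 : (2 * I) * (f z - f 0) = 0 := by linear_combination h
  simpa [sub_eq_zero] using h2

/-- In the situation of a royal node ζ ∈ 𝕋 of a nonconstant
rational Γ-inner h = (s,p) with h(ζ) = (2·conj(ω), conj(ω)²), ω ∈ 𝕋, and a
finite Blaschke product υ with υ(ζ) = ω, it cannot happen that the derivatives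
of both 2υp − s and 2 − υs vanish at ζ; that is, Φ∘(υ,h) has at most one
cancellation at ζ. -/
theorem at_most_one_cancellation
    (s p υ : ℂ → ℂ) (h : IsRationalGammaInner s p)
    (hnc : ¬ ∃ c : ℂ × ℂ, ∀ z : ℂ, ‖z‖ ≤ 1 → (s z, p z) = c)
    (hυ : IsFiniteBlaschke υ)
    (ζ ω : ℂ) (hζ : ‖ζ‖ = 1) (hω : ‖ω‖ = 1)
    (hsv : s ζ = 2 * conj ω) (hpv : p ζ = (conj ω) ^ 2) (hυv : υ ζ = ω) :
    ¬ (deriv (fun z => 2 * υ z * p z - s z) ζ = 0 ∧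
        deriv (fun z => 2 - υ z * s z) ζ = 0) := by
  rintro ⟨h₁, h₂⟩
  obtain ⟨⟨hs, hp, -⟩, hbd⟩ := h
  have hωω : ω * conj ω = 1 := by simp [mul_conj', hω]
  have hpζ : ‖p ζ‖ = 1 := (hbd ζ hζ).1
  have hp_le : ∀ z : ℂ, ‖z‖ ≤ 1 → ‖p z‖ ≤ 1 := fun _ =>
    norm_le_of_forall_norm_eq_one_norm_le hp.differentiableOn fun w hw => (hbd w hw).1.le
  have hp' : deriv p ζ = 0 := by
    have hAp := phasarDeriv_nonneg_of_norm_le_one hζ (hp.differentiableAt hζ.le) hp_le hpζ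
    have hAυ := phasarDeriv_nonneg_of_norm_le_one hζ (hυ.differentiableAt hζ.le)
      (fun _ => hυ.norm_le_one) (hυv ▸ hω)
    have hrel := two_mul_phasarDeriv_eq_neg hω (hs.differentiableAt hζ.le)
      (hp.differentiableAt hζ.le) (hυ.differentiableAt hζ.le) hsv hpv hυv h₁ h₂
    have hAp₀ : phasarDeriv p ζ = 0 :=
      le_antisymm (neg_nonneg.1 (hrel ▸ mul_nonneg (by norm_num) hAυ)) hAp
    have hζ₀ : ζ ≠ 0 := by rintro rfl; simp at hζ
    have hpζ₀ : p ζ ≠ 0 := fun h => by simp [h] at hpζ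
    simpa [phasarDeriv, hζ₀, hpζ₀] using hAp₀
  have hpc := hp.eq_of_deriv_eq_zero hζ hp_le hpζ hp'
  have hsc := eq_of_conj_eq_on_sphere (hs.differentiableOn.const_mul ω) fun z hz => by
    have hb := (hbd z hz).2.2
    rw [hpc z hz.le, hpv] at hb
    rw [map_mul]
    linear_combination (-ω) * hb - (conj ω * conj (s z)) * hωω
  refine hnc ⟨(conj ω * (ω * s 0), conj ω ^ 2), fun z hz => Prod.ext ?_ ((hpc z hz).trans hpv)⟩
  linear_combination conj ω * hsc z hz - s z * hωω
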